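/- arXiv:2204.01435 — 2 statements merged into one kernel-verified Lean document; each statement's English description precedes it below -/
import Mathlib

section
/- Let T > 0, let H : ℝ × ℝ → ℝ be C² and uniformly convex in its second variable, let L be the Legendre transform of H, let ϖ : [0,T] → ℝ be continuous, and let u ∈ C¹([0,T] × ℝ) satisfy the Hamilton–Jacobi equation -u_t(t,x) + H(x, ϖ(t) + u_x(t,x)) = 0 on [0,T] × ℝ with u(T,x) = u_T(x). If a C¹ trajectory x : [t,T] → ℝ with x(t) = x₀ satisfies the feedback ODE ẋ(s) = -H_p(x(s), ϖ(s) + u_x(s, x(s))) for all s ∈ [t,T], then ∫_t^T [ L(x(s), ẋ(s)) + ϖ(s) ẋ(s) ] ds + u_T(x(T)) = u(t, x₀); that is, the feedback control v* = -H_p(x, ϖ + u_x) is optimal and u is the value function. -/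
/-!
Along any `C¹` curve, `d/ds u(s, γ s) = u_t + γ' u_x`, and by the Hamilton–Jacobi equation
`u_t = H(γ, ϖ + u_x)`. When `γ'` is the feedback `-H_p(γ, ϖ + u_x)`, convexity of `H(x, ·)` makes
`p = ϖ + u_x` a maximiser in the Legendre transform, so `L(γ, γ') = -(ϖ + u_x) γ' - H(γ, ϖ + u_x)`
and the running cost `L(γ, γ') + ϖ γ'` is exactly `-d/ds u(s, γ s)`. Integrating over `[t, T]`
and using `u(T, ·) = u_T` gives the identity.
-/

open Set intervalIntegral Function

theorem ConvexOn.add_deriv_mul_sub_le {f : ℝ → ℝ} (hf : ConvexOn ℝ univ f) {q : ℝ}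
    (hfq : DifferentiableAt ℝ f q) (p : ℝ) :
    f q + deriv f q * (p - q) ≤ f p := by
  rcases lt_trichotomy p q with hpq | rfl | hqp
  · have hslope := hf.slope_le_deriv (mem_univ p) (mem_univ q) hpq hfq
    rw [slope_def_field, div_le_iff₀ (sub_pos.2 hpq)] at hslope
    linarith
  · simp
  · have hslope := hf.deriv_le_slope (mem_univ q) (mem_univ p) hqp hfq
    rw [slope_def_field, le_div_iff₀ (sub_pos.2 hqp)] at hslope
    linarith

theorem ConvexOn.isGreatest_legendre {f : ℝ → ℝ} (hf : ConvexOn ℝ univ f) {q : ℝ}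
    (hfq : DifferentiableAt ℝ f q) :
    IsGreatest {z | ∃ p, z = -p * -deriv f q - f p} (-q * -deriv f q - f q) := by
  refine ⟨⟨q, rfl⟩, ?_⟩
  rintro z ⟨p, rfl⟩
  linarith [hf.add_deriv_mul_sub_le hfq p]

theorem convexOn_univ_of_contDiff_two_of_deriv2_nonneg {f : ℝ → ℝ} (hf : ContDiff ℝ 2 f)
    (hf'' : ∀ p, 0 ≤ deriv (deriv f) p) : ConvexOn ℝ univ f := by
  have hf' := contDiff_succ_iff_deriv.mp (show ContDiff ℝ (1 + 1) f from hf)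
  exact convexOn_univ_of_deriv2_nonneg hf'.1 (hf'.2.2.differentiable one_ne_zero) hf''

section PartialDerivatives

variable {u : ℝ → ℝ → ℝ}

theorem hasDerivAt_uncurry_comp_curve {γ : ℝ → ℝ} {s v : ℝ}
    (hu : DifferentiableAt ℝ (uncurry u) (s, γ s)) (hγ : HasDerivAt γ v s) :
    HasDerivAt (fun r => u r (γ r)) (fderiv ℝ (uncurry u) (s, γ s) (1, v)) s :=
  hu.hasFDerivAt.comp_hasDerivAt (f := fun r => (r, γ r)) s ((hasDerivAt_id s).prodMk hγ)

theorem deriv_fst_eq_fderiv_apply {t x : ℝ} (hu : DifferentiableAt ℝ (uncurry u) (t, x)) :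
    deriv (fun s => u s x) t = fderiv ℝ (uncurry u) (t, x) (1, 0) :=
  (hasDerivAt_uncurry_comp_curve (γ := fun _ => x) hu (hasDerivAt_const t x)).deriv

theorem deriv_snd_eq_fderiv_apply {t x : ℝ} (hu : DifferentiableAt ℝ (uncurry u) (t, x)) :
    deriv (fun y => u t y) x = fderiv ℝ (uncurry u) (t, x) (0, 1) :=
  (hu.hasFDerivAt.comp_hasDerivAt (f := fun y => (t, y)) x
    ((hasDerivAt_const x t).prodMk (hasDerivAt_id x))).deriv

theorem hasDerivAt_comp_curve {γ : ℝ → ℝ} {s v : ℝ}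
    (hu : DifferentiableAt ℝ (uncurry u) (s, γ s)) (hγ : HasDerivAt γ v s) :
    HasDerivAt (fun r => u r (γ r))
      (deriv (fun r => u r (γ s)) s + v * deriv (fun y => u s y) (γ s)) s := by
  convert hasDerivAt_uncurry_comp_curve hu hγ using 1
  rw [deriv_fst_eq_fderiv_apply hu, deriv_snd_eq_fderiv_apply hu, ← smul_eq_mul, ← map_smul,
    ← map_add]
  simp

theorem continuousOn_deriv_comp_curve (hu : ContDiff ℝ 1 (uncurry u)) {γ γ' : ℝ → ℝ}
    {S : Set ℝ} (hγ : ContinuousOn γ S) (hγ' : ContinuousOn γ' S) :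
    ContinuousOn (fun s => deriv (fun r => u r (γ s)) s + γ' s * deriv (fun y => u s y) (γ s))
      S := by
  have hdu := hu.differentiable one_ne_zero
  simp only [deriv_fst_eq_fderiv_apply (hdu _), deriv_snd_eq_fderiv_apply (hdu _)]
  have hDu : ContinuousOn (fun s => fderiv ℝ (uncurry u) (s, γ s)) S :=
    (hu.continuous_fderiv one_ne_zero).comp_continuousOn (continuousOn_id.prodMk hγ)
  exact (hDu.clm_apply continuousOn_const).add (hγ'.mul (hDu.clm_apply continuousOn_const))

end PartialDerivatives

theorem hj_verification_optimality_general
    (T : ℝ)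
    (H : ℝ → ℝ → ℝ) (L : ℝ → ℝ → ℝ) (ϖ : ℝ → ℝ) (u : ℝ → ℝ → ℝ) (uT : ℝ → ℝ)
    -- H is C²
    (hH : ContDiff ℝ 2 (fun q : ℝ × ℝ => H q.1 q.2))
    -- H is uniformly convex in its second variable: H_pp ≥ θ for some θ > 0
    (hHconv : ∃ θ : ℝ, 0 < θ ∧ ∀ x p : ℝ, θ ≤ deriv (fun p' => deriv (fun p'' => H x p'') p') p)
    -- L is the (finite) Legendre transform of H: L(x,v) = sup_p [-p v - H(x,p)]
    (hL : ∀ x v : ℝ, IsLUB {z : ℝ | ∃ p : ℝ, z = -p * v - H x p} (L x v))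
    -- u is C¹
    (hu : ContDiff ℝ 1 (fun q : ℝ × ℝ => u q.1 q.2))
    -- Hamilton–Jacobi equation on [0,T] × ℝ
    (hHJ : ∀ t ∈ Icc (0 : ℝ) T, ∀ x : ℝ,
      -(deriv (fun s => u s x) t) + H x (ϖ t + deriv (fun y => u t y) x) = 0)
    -- terminal condition
    (huT : ∀ x : ℝ, u T x = uT x) :
    ∀ t ∈ Icc (0 : ℝ) T, ∀ x₀ : ℝ, ∀ γ γ' : ℝ → ℝ,
      (∀ s ∈ Icc t T, HasDerivAt γ (γ' s) s) →
      ContinuousOn γ' (Icc t T) →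
      γ t = x₀ →
      -- the feedback ODE: ẋ(s) = -H_p(x(s), ϖ(s) + u_x(s, x(s)))
      (∀ s ∈ Icc t T,
        γ' s = -(deriv (fun p => H (γ s) p) (ϖ s + deriv (fun y => u s y) (γ s)))) →
      (∫ s in t..T, (L (γ s) (γ' s) + ϖ s * γ' s)) + uT (γ T) = u t x₀ := by
  intro t ht x₀ γ γ' hγ hγ' hγt hode
  obtain ⟨θ, hθ, hHpp⟩ := hHconv
  have hHx : ∀ x, ContDiff ℝ 2 (H x) := fun x => hH.comp (contDiff_const.prodMk contDiff_id)
  have hLeg : ∀ x q, L x (-deriv (H x) q) = -q * -deriv (H x) q - H x q := fun x q =>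
    (hL x _).unique (ConvexOn.isGreatest_legendre
      (convexOn_univ_of_contDiff_two_of_deriv2_nonneg (hHx x) fun p => hθ.le.trans (hHpp x p))
      ((hHx x).differentiable two_ne_zero q)).isLUB
  have hcost : ∀ s ∈ Icc t T, L (γ s) (γ' s) + ϖ s * γ' s
      = -(deriv (fun r => u r (γ s)) s + γ' s * deriv (fun y => u s y) (γ s)) := by
    intro s hs
    have hHJs := hHJ s ⟨ht.1.trans hs.1, hs.2⟩ (γ s)
    rw [hode s hs, hLeg]
    linarith
  have hFTC : ∫ s in t..T, (deriv (fun r => u r (γ s)) s + γ' s * deriv (fun y => u s y) (γ s))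
      = u T (γ T) - u t (γ t) := by
    refine integral_eq_sub_of_hasDerivAt (f := fun s => u s (γ s)) (fun s hs => ?_) <|
      ContinuousOn.intervalIntegrable_of_Icc ht.2 <| continuousOn_deriv_comp_curve hu
        (fun s hs => (hγ s hs).continuousAt.continuousWithinAt) hγ'
    rw [uIcc_of_le ht.2] at hs
    exact hasDerivAt_comp_curve (hu.differentiable one_ne_zero _) (hγ s hs)
  rw [integral_congr fun s hs => hcost s (by rwa [uIcc_of_le ht.2] at hs),
    integral_neg, hFTC, hγt, ← huT]
  ring

/-- Hamilton–Jacobi verification theorem, optimality of the feedback control.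
If `u` is a `C¹` solution of `-u_t + H(x, ϖ(t) + u_x) = 0` with `u(T,·) = uT`, where `H` is `C²`
and uniformly convex in its second variable and `L` is the Legendre transform of `H`,
and a `C¹` trajectory follows the feedback ODE `ẋ(s) = -H_p(x(s), ϖ(s) + u_x(s, x(s)))`,
then `∫_t^T [L(x(s), ẋ(s)) + ϖ(s) ẋ(s)] ds + uT(x(T)) = u(t, x₀)`:
the feedback control is optimal and `u` is the value function. -/
theorem hj_verification_optimality
    (T : ℝ) (hT : 0 < T)
    (H : ℝ → ℝ → ℝ) (L : ℝ → ℝ → ℝ) (ϖ : ℝ → ℝ) (u : ℝ → ℝ → ℝ) (uT : ℝ → ℝ)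
    -- H is C²
    (hH : ContDiff ℝ 2 (fun q : ℝ × ℝ => H q.1 q.2))
    -- H is uniformly convex in its second variable: H_pp ≥ θ for some θ > 0
    (hHconv : ∃ θ : ℝ, 0 < θ ∧ ∀ x p : ℝ, θ ≤ deriv (fun p' => deriv (fun p'' => H x p'') p') p)
    -- L is the (finite) Legendre transform of H: L(x,v) = sup_p [-p v - H(x,p)]
    (hL : ∀ x v : ℝ, IsLUB {z : ℝ | ∃ p : ℝ, z = -p * v - H x p} (L x v))
    -- ϖ is continuous on [0,T]
    (hϖ : ContinuousOn ϖ (Icc 0 T))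
    -- u is C¹
    (hu : ContDiff ℝ 1 (fun q : ℝ × ℝ => u q.1 q.2))
    -- Hamilton–Jacobi equation on [0,T] × ℝ
    (hHJ : ∀ t ∈ Icc (0 : ℝ) T, ∀ x : ℝ,
      -(deriv (fun s => u s x) t) + H x (ϖ t + deriv (fun y => u t y) x) = 0)
    -- terminal condition
    (huT : ∀ x : ℝ, u T x = uT x) :
    ∀ t ∈ Icc (0 : ℝ) T, ∀ x₀ : ℝ, ∀ γ γ' : ℝ → ℝ,
      (∀ s ∈ Icc t T, HasDerivAt γ (γ' s) s) →
      ContinuousOn γ' (Icc t T) →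
      γ t = x₀ →
      -- the feedback ODE: ẋ(s) = -H_p(x(s), ϖ(s) + u_x(s, x(s)))
      (∀ s ∈ Icc t T,
        γ' s = -(deriv (fun p => H (γ s) p) (ϖ s + deriv (fun y => u s y) (γ s)))) →
      (∫ s in t..T, (L (γ s) (γ' s) + ϖ s * γ' s)) + uT (γ T) = u t x₀ :=
  hj_verification_optimality_general T H L ϖ u uT hH hHconv hL hu hHJ huT
end

section
/- Let T > 0, let H(x,p) = p²/2 (the Legendre transform of L(x,v) = v²/2), let Q : [0,T] → ℝ be continuous, and let m₀ be a C¹ probability density on ℝ. Define ϖ(t) = -Q(t), u(t,x) = -(1/2) ∫_t^T Q(s)² ds, and m(t,x) = m₀( x - ∫_0^t Q(s) ds ). Then (u, m, ϖ) solves the MFG price system: (i) -u_t + (ϖ(t) + u_x)²/2 = 0 on [0,T] × ℝ; (ii) m_t - ( (ϖ(t) + u_x) m )_x = 0 on [0,T] × ℝ; (iii) -∫_ℝ (ϖ(t) + u_x) m dx = Q(t) for all t ∈ [0,T]; (iv) m(0,·) = m₀ and u(T,·) = 0. In particular, in the quadratic case with zero terminal cost the equilibrium price is ϖ = -Q. 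-/
open Real Set MeasureTheory intervalIntegral

/-!
With zero terminal cost and `ϖ = -Q`, the value function `u` does not depend on `x`, so the
Hamilton–Jacobi equation reduces to `u_t = Q²/2`, which holds by the fundamental theorem of
calculus. The velocity field `ϖ + u_x = -Q(t)` is then constant in space, so the transport
equation is solved by translating `m₀` along `F(t) = ∫₀ᵗ Q`; translation preserves total mass,
which gives the balance condition.
-/

theorem Continuous.hasDerivAt_integral_left {E : Type*} [NormedAddCommGroup E]
    [NormedSpace ℝ E] [CompleteSpace E] {f : ℝ → E} (hf : Continuous f) (b t : ℝ) :
    HasDerivAt (fun s => ∫ τ in s..b, f τ) (-f t) t :=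
  integral_hasDerivAt_left (hf.intervalIntegrable _ _) (hf.stronglyMeasurableAtFilter _ _)
    hf.continuousAt

theorem deriv_neg_half_integral_sq_left {Q : ℝ → ℝ} (hQ : Continuous Q) (T t : ℝ) :
    deriv (fun s => -(1 / 2) * ∫ τ in s..T, Q τ ^ 2) t = Q t ^ 2 / 2 := by
  have hQ2 : Continuous fun τ => Q τ ^ 2 := hQ.pow 2
  rw [((hQ2.hasDerivAt_integral_left T t).const_mul _).deriv]
  ring

theorem hasDerivAt_comp_sub_of_hasDerivAt {g F : ℝ → ℝ} {q t : ℝ} (x : ℝ)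
    (hg : DifferentiableAt ℝ g (x - F t)) (hF : HasDerivAt F q t) :
    HasDerivAt (fun s => g (x - F s)) (-q * deriv g (x - F t)) t :=
  (hg.hasDerivAt.comp (h := fun s => x - F s) t ((hasDerivAt_const t x).sub hF)).congr_deriv
    (by ring)

theorem transport_comp_sub_of_hasDerivAt {g F : ℝ → ℝ} {q t : ℝ} (x : ℝ)
    (hg : DifferentiableAt ℝ g (x - F t)) (hF : HasDerivAt F q t) :
    deriv (fun s => g (x - F s)) t - deriv (fun y => -q * g (y - F t)) x = 0 := by
  rw [(hasDerivAt_comp_sub_of_hasDerivAt x hg hF).deriv,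
    ((hg.hasDerivAt.comp_sub_const x (F t)).const_mul (-q)).deriv]
  ring

theorem quadratic_mfg_explicit_solution_general
    (T : ℝ)
    (Q : ℝ → ℝ) (hQ : Continuous Q)
    (m₀ : ℝ → ℝ)
    -- m₀ is a C¹ probability density
    (hm₀reg : ContDiff ℝ 1 m₀)
    (hm₀prob : (∫ x : ℝ, m₀ x) = 1) :
    ∀ ϖ : ℝ → ℝ, ∀ u m : ℝ → ℝ → ℝ,
      (∀ t : ℝ, ϖ t = -Q t) →
      (∀ t x : ℝ, u t x = -(1 / 2) * ∫ s in t..T, (Q s) ^ 2) →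
      (∀ t x : ℝ, m t x = m₀ (x - ∫ s in (0:ℝ)..t, Q s)) →
      -- (i) Hamilton–Jacobi equation: -u_t + (ϖ + u_x)²/2 = 0 on [0,T] × ℝ
      ((∀ t ∈ Icc (0 : ℝ) T, ∀ x : ℝ,
        -(deriv (fun s => u s x) t) + (ϖ t + deriv (fun y => u t y) x) ^ 2 / 2 = 0) ∧
      -- (ii) transport equation: m_t - ((ϖ + u_x) m)_x = 0 on [0,T] × ℝ
      (∀ t ∈ Icc (0 : ℝ) T, ∀ x : ℝ,
        deriv (fun s => m s x) t -
          deriv (fun y => (ϖ t + deriv (fun y' => u t y') y) * m t y) x = 0) ∧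
      -- (iii) balance condition: -∫ (ϖ + u_x) m dx = Q(t)
      (∀ t ∈ Icc (0 : ℝ) T,
        -(∫ x : ℝ, (ϖ t + deriv (fun y => u t y) x) * m t x) = Q t) ∧
      -- (iv) initial and terminal conditions
      ((∀ x : ℝ, m 0 x = m₀ x) ∧ (∀ x : ℝ, u T x = 0))) := by
  intro ϖ u m hϖ hu hm
  obtain rfl : ϖ = fun t => -Q t := funext hϖ
  obtain rfl : u = fun t _ => -(1 / 2) * ∫ s in t..T, Q s ^ 2 := funext₂ hu
  obtain rfl : m = fun t x => m₀ (x - ∫ s in (0:ℝ)..t, Q s) := funext₂ hm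
  simp only [deriv_const, add_zero]
  refine ⟨fun t _ x => ?_, fun t _ x => ?_, fun t _ => ?_, fun x => by simp, fun x => by simp⟩
  · rw [deriv_neg_half_integral_sq_left hQ]
    ring
  · exact transport_comp_sub_of_hasDerivAt x (hm₀reg.differentiable one_ne_zero _)
      (hQ.integral_hasStrictDerivAt 0 t).hasDerivAt
  · rw [MeasureTheory.integral_const_mul, integral_sub_right_eq_self, hm₀prob]
    ring

/-- explicit solution of the price-formation MFG in the quadratic case
`H(x,p) = p²/2`, zero terminal cost.  With `ϖ(t) = -Q(t)`,
`u(t,x) = -(1/2)∫_t^T Q(s)² ds` and `m(t,x) = m₀(x - ∫_0^t Q(s) ds)`, the triple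
`(u, m, ϖ)` solves the MFG price system; in particular the equilibrium price is
`ϖ = -Q`. -/
theorem quadratic_mfg_explicit_solution
    (T : ℝ) (hT : 0 < T)
    (Q : ℝ → ℝ) (hQ : Continuous Q)
    (m₀ : ℝ → ℝ)
    -- m₀ is a C¹ probability density
    (hm₀reg : ContDiff ℝ 1 m₀)
    (hm₀nonneg : ∀ x : ℝ, 0 ≤ m₀ x)
    (hm₀int : Integrable m₀)
    (hm₀prob : (∫ x : ℝ, m₀ x) = 1) :
    ∀ ϖ : ℝ → ℝ, ∀ u m : ℝ → ℝ → ℝ,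
      (∀ t : ℝ, ϖ t = -Q t) →
      (∀ t x : ℝ, u t x = -(1 / 2) * ∫ s in t..T, (Q s) ^ 2) →
      (∀ t x : ℝ, m t x = m₀ (x - ∫ s in (0:ℝ)..t, Q s)) →
      -- (i) Hamilton–Jacobi equation: -u_t + (ϖ + u_x)²/2 = 0 on [0,T] × ℝ
      ((∀ t ∈ Icc (0 : ℝ) T, ∀ x : ℝ,
        -(deriv (fun s => u s x) t) + (ϖ t + deriv (fun y => u t y) x) ^ 2 / 2 = 0) ∧
      -- (ii) transport equation: m_t - ((ϖ + u_x) m)_x = 0 on [0,T] × ℝ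
      (∀ t ∈ Icc (0 : ℝ) T, ∀ x : ℝ,
        deriv (fun s => m s x) t -
          deriv (fun y => (ϖ t + deriv (fun y' => u t y') y) * m t y) x = 0) ∧
      -- (iii) balance condition: -∫ (ϖ + u_x) m dx = Q(t)
      (∀ t ∈ Icc (0 : ℝ) T,
        -(∫ x : ℝ, (ϖ t + deriv (fun y => u t y) x) * m t x) = Q t) ∧
      -- (iv) initial and terminal conditions
      ((∀ x : ℝ, m 0 x = m₀ x) ∧ (∀ x : ℝ, u T x = 0))) :=
  quadratic_mfg_explicit_solution_general T Q hQ m₀ hm₀reg hm₀prob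
end
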